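/- arXiv:2309.00142 — 8 statements merged into one kernel-verified Lean document; each statement's English description precedes it below -/
import Mathlib

section
/- For all nonnegative integers t and n, d(4t+2, 4n+1) = d(2t+1, 2n) + 1, where d(t,n) = r(n+t) − r(n) and r counts overlapping occurrences of the block 11 in binary. -/
/-- `r n` counts indices `j ≥ 0` with the `j`-th and `(j+1)`-st binary digits of `n` both `1`. -/
def r (n : ℕ) : ℕ :=
  ((Finset.range (n + 1)).filter (fun j => n.testBit j ∧ n.testBit (j + 1))).card

/-- `d t n = r (n + t) - r n` as an integer. -/
def d (t n : ℕ) : ℤ := (r (n + t) : ℤ) - (r n : ℤ)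

/-!
Appending a binary digit `b` to `m` creates a new block `11` exactly when `b` and the last digit
of `m` are both `1`, so `r (2m) = r m` and `r (2m+1) = r m + [m odd]`. Since `4n+1 = 2(2n)+1` and
`4n+1 + 4t+2 = 2(2n+2t+1)+1`, the left side picks up one extra block from the odd number
`2n+2t+1` and none from the even `2n`.
-/

open Finset

lemma Nat.lt_of_testBit_eq_true {n j : ℕ} (h : n.testBit j = true) : j < n :=
  (Nat.lt_two_pow_self).trans_le (Nat.ge_two_pow_of_testBit h)

lemma r_eq_card_filter_range {n N : ℕ} (hN : n ≤ N) :
    r n = #{j ∈ range N | n.testBit j ∧ n.testBit (j + 1)} := by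
  unfold r
  congr 1
  ext j
  simp only [mem_filter, mem_range, and_congr_left_iff, and_imp]
  intro hj _
  have := Nat.lt_of_testBit_eq_true hj
  omega

lemma r_bit (b : Bool) (m : ℕ) :
    r (Nat.bit b m) = r m + if b ∧ m.testBit 0 then 1 else 0 := by
  have hbit : Nat.bit b m ≤ 2 * m + 1 := by cases b <;> simp [Nat.bit_val]
  rw [r_eq_card_filter_range (N := 2 * m + 1 + 1) (by omega),
    r_eq_card_filter_range (N := 2 * m + 1) (by omega), card_filter, card_filter,
    sum_range_succ']
  simp only [Nat.testBit_bit_succ, Nat.testBit_bit_zero, zero_add]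

lemma r_two_mul (m : ℕ) : r (2 * m) = r m := by
  simpa [Nat.bit_val] using r_bit false m

lemma r_two_mul_add_one (m : ℕ) : r (2 * m + 1) = r m + if m.testBit 0 then 1 else 0 := by
  simpa [Nat.bit_val] using r_bit true m

theorem d_rec (t n : ℕ) : d (4 * t + 2) (4 * n + 1) = d (2 * t + 1) (2 * n) + 1 := by
  have hsum : 4 * n + 1 + (4 * t + 2) = 2 * (2 * n + 2 * t + 1) + 1 := by ring
  have hodd : (2 * n + 2 * t + 1).testBit 0 = true := by simp [Nat.testBit_zero]; omega
  have heven : (2 * n).testBit 0 = false := by simp [Nat.testBit_zero]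
  unfold d
  rw [hsum, show 4 * n + 1 = 2 * (2 * n) + 1 by ring,
    show 2 * n + (2 * t + 1) = 2 * n + 2 * t + 1 by ring,
    r_two_mul_add_one, r_two_mul_add_one, r_two_mul, hodd, heven]
  simp only [if_true, Bool.false_eq_true, if_false, add_zero, Nat.cast_add, Nat.cast_one]
  ring
end

section
/- Let (v_t) be defined by v_0 = 0, v_1 = 3/2, v_{4t} = v_{2t}, v_{4t+2} = v_{2t+1} + 1, and v_{2t+1} = (v_t + v_{t+1})/2 + 3/4. Then for all nonnegative integers t, |v_{t+1} − v_t| ≤ 3/2. -/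
theorem v_succ_diff (v : ℕ → ℚ) (h0 : v 0 = 0) (h1 : v 1 = 3 / 2)
    (h4 : ∀ t : ℕ, v (4 * t) = v (2 * t))
    (h42 : ∀ t : ℕ, v (4 * t + 2) = v (2 * t + 1) + 1)
    (hodd : ∀ t : ℕ, v (2 * t + 1) = (v t + v (t + 1)) / 2 + 3 / 4) :
    ∀ t : ℕ, |v (t + 1) - v t| ≤ 3 / 2 := by
  intro t
  induction t using Nat.strong_induction_on with
  | _ t ih =>
  rcases Nat.even_or_odd t with ⟨s, hs⟩ | ⟨s, hs⟩
  · have hts : t = 2 * s := by omega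
    subst hts
    rcases Nat.eq_zero_or_pos s with rfl | hspos
    · norm_num [h0, h1, abs_le]
    · have hih := ih s (by omega)
      have ho := hodd s
      rcases Nat.even_or_odd s with ⟨u, hu⟩ | ⟨u, hu⟩
      · have he : v (2 * s) = v s := by
          have hsu : s = 2 * u := by omega
          rw [hsu, show 2 * (2 * u) = 4 * u by ring, h4 u]
        rw [he, ho, abs_le] at *
        constructor <;> linarith [hih.1, hih.2]
      · have he : v (2 * s) = v s + 1 := by
          have hsu : s = 2 * u + 1 := by omega
          rw [hsu, show 2 * (2 * u + 1) = 4 * u + 2 by ring, h42 u]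
        rw [he, ho, abs_le] at *
        constructor <;> linarith [hih.1, hih.2]
  · have hts : t = 2 * s + 1 := by omega
    subst hts
    have hih := ih s (by omega)
    have ho := hodd s
    rcases Nat.even_or_odd (s + 1) with ⟨u, hu⟩ | ⟨u, hu⟩
    · have he : v (2 * s + 1 + 1) = v (s + 1) := by
        have hsu : s + 1 = 2 * u := by omega
        rw [show 2 * s + 1 + 1 = 4 * u by omega, h4 u, show 2 * u = s + 1 by omega]
      rw [he, ho, abs_le] at *
      constructor <;> linarith [hih.1, hih.2]
    · have he : v (2 * s + 1 + 1) = v (s + 1) + 1 := by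
        have hsu : s + 1 = 2 * u + 1 := by omega
        rw [show 2 * s + 1 + 1 = 4 * u + 2 by omega, h42 u, show 2 * u + 1 = s + 1 by omega]
      rw [he, ho, abs_le] at *
      constructor <;> linarith [hih.1, hih.2]
end

section
/- Let (v_t) be defined by v_0 = 0, v_1 = 3/2, v_{4t} = v_{2t}, v_{4t+2} = v_{2t+1} + 1, and v_{2t+1} = (v_t + v_{t+1})/2 + 3/4. Then v_t is monotone under digit-appending: v_{2t} ≥ v_t and v_{2t+1} ≥ v_t for all t ≥ 0. -/
theorem v_monotone (v : ℕ → ℚ) (h0 : v 0 = 0) (h1 : v 1 = 3 / 2)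
    (h4 : ∀ t : ℕ, v (4 * t) = v (2 * t))
    (h42 : ∀ t : ℕ, v (4 * t + 2) = v (2 * t + 1) + 1)
    (hodd : ∀ t : ℕ, v (2 * t + 1) = (v t + v (t + 1)) / 2 + 3 / 4) :
    ∀ t : ℕ, v t ≤ v (2 * t) ∧ v t ≤ v (2 * t + 1) := by
  have hdouble : ∀ s : ℕ, v (2 * s) = v s ∨ v (2 * s) = v s + 1 := by
    intro s
    rcases Nat.even_or_odd s with ⟨u, hu⟩ | ⟨u, hu⟩
    · left
      have e1 : 2 * s = 4 * u := by omega
      have e2 : s = 2 * u := by omega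
      rw [e1, h4, e2]
    · right
      have e1 : 2 * s = 4 * u + 2 := by omega
      rw [e1, h42, hu]
  have hd : ∀ t : ℕ, -(3/2 : ℚ) ≤ v (t + 1) - v t ∧ v (t + 1) - v t ≤ 3/2 := by
    intro t
    induction t using Nat.strong_induction_on with
    | _ t ih =>
      match t with
      | 0 => rw [h0, h1]; norm_num
      | Nat.succ n =>
        simp only [Nat.succ_eq_add_one]
        rcases Nat.even_or_odd (n + 1) with ⟨s, hs⟩ | ⟨s, hs⟩
        · have hslt : s < n + 1 := by omega
          obtain ⟨hl, hr⟩ := ih s hslt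
          have e : n + 1 = 2 * s := by omega
          rw [e, hodd s]
          rcases hdouble s with h | h <;> rw [h] <;> constructor <;> linarith
        · have hslt : s < n + 1 := by omega
          obtain ⟨hl, hr⟩ := ih s hslt
          have e : n + 1 = 2 * s + 1 := by omega
          have e2 : 2 * s + 1 + 1 = 2 * (s + 1) := by ring
          rw [e, e2, hodd s]
          rcases hdouble (s + 1) with h | h <;> rw [h] <;> constructor <;> linarith
  intro t
  constructor
  · rcases hdouble t with h | h <;> rw [h] <;> linarith
  · obtain ⟨hl, hr⟩ := hd t
    rw [hodd t]
    linarith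
end

section
/- Let (v_t) be as defined by the recurrences v_0 = 0, v_1 = 3/2, v_{4t} = v_{2t}, v_{4t+2} = v_{2t+1} + 1, v_{2t+1} = (v_t + v_{t+1})/2 + 3/4. Then for all t ≥ 0, v_{4t+1} − v_t ≥ 3/4. -/
theorem v_four_t_one (v : ℕ → ℚ) (h0 : v 0 = 0) (h1 : v 1 = 3 / 2)
    (h4 : ∀ t : ℕ, v (4 * t) = v (2 * t))
    (h42 : ∀ t : ℕ, v (4 * t + 2) = v (2 * t + 1) + 1)
    (hodd : ∀ t : ℕ, v (2 * t + 1) = (v t + v (t + 1)) / 2 + 3 / 4) :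
    ∀ t : ℕ, 3 / 4 ≤ v (4 * t + 1) - v t := by
  have hC : ∀ t : ℕ, v t - 3/2 ≤ v (t+1) := by
    intro t
    induction t using Nat.strong_induction_on with
    | _ t ih =>
      rcases Nat.eq_zero_or_pos t with rfl | hpos
      · rw [h0, h1]; norm_num
      obtain ⟨m, r, hr, rfl⟩ : ∃ m r, r < 4 ∧ t = 4*m + r :=
        ⟨t/4, t%4, Nat.mod_lt _ (by norm_num), (Nat.div_add_mod t 4).symm⟩
      interval_cases r
      · have hm : 0 < m := by omega
        have e1 : 4*m + 0 + 1 = 2*(2*m) + 1 := by ring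
        have e2 : v (4*m+0) = v (2*m) := by simpa using h4 m
        have h := ih (2*m) (by omega)
        rw [e1, hodd (2*m), e2]
        linarith
      · have e1 : 4*m + 1 + 1 = 4*m + 2 := by ring
        have h := ih (2*m) (by omega)
        rw [e1, h42 m, show 4*m+1 = 2*(2*m)+1 by ring, hodd (2*m)]
        linarith
      · have e1 : 4*m + 2 + 1 = 2*(2*m+1) + 1 := by ring
        have h := ih (2*m+1) (by omega)
        rw [e1, hodd (2*m+1), h42 m]
        linarith
      · have e1 : 4*m + 3 + 1 = 4*(m+1) := by ring
        have h := ih (2*m+1) (by omega)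
        rw [e1, h4 (m+1), show 4*m+3 = 2*(2*m+1)+1 by ring, hodd (2*m+1),
          show 2*(m+1) = (2*m+1)+1 by ring]
        linarith
  have hA : ∀ t : ℕ, v t ≤ v (2*t) := by
    intro t
    rcases Nat.even_or_odd t with ⟨s, rfl⟩ | ⟨s, rfl⟩
    · rw [show 2*(s+s) = 4*s by ring, h4, show s+s = 2*s by ring]
    · rw [show 2*(2*s+1) = 4*s+2 by ring, h42]
      linarith
  intro t
  rw [show 4*t+1 = 2*(2*t)+1 by ring, hodd (2*t), hodd t]
  have h1' := hC t
  have h2' := hA t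
  linarith
end

section
/- Let (v_t) be defined by v_0 = 0, v_1 = 3/2, v_{4t} = v_{2t}, v_{4t+2} = v_{2t+1} + 1, v_{2t+1} = (v_t + v_{t+1})/2 + 3/4, and let N(t) denote the number of occurrences of the block 01 in the binary expansion of t (padded with zeros to the left), equivalently the number of maximal blocks of 1s in the binary expansion of t. Then (3/4)·N(t) ≤ v_t ≤ 5·N(t) for all t ≥ 0. -/
/-!
Both bounds come from one comparison principle for the recursion
`f (2t) = f t + [t odd]`, `f (2t+1) = (f t + f (t+1)) / 2 + 3/4`, which `v` satisfies
(the two even rules combine into the first one): a subsolution (the recursion with `≤`) lies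
below every supersolution (the recursion with `≥`) that dominates it at `0` and `1`.
Since `N (2t) = N t` and `N (2t+1) = N t + [t even]`, the function `3/4 · N` is a subsolution.
The function `5 N` is not a supersolution, but `5 N - deficit` is, for a nonnegative
correction `deficit` that depends on the final block of `1`s of `t`.
-/

/-- The number of maximal blocks of `1`s in the binary expansion of `t`, equivalently the
number of occurrences of `01` in the left-zero-padded binary expansion of `t`. -/
def blockCount (t : ℕ) : ℕ :=
  ((Finset.range (t + 1)).filter (fun j => t.testBit j ∧ ¬ t.testBit (j + 1))).card

open Finset

lemma blockCount_eq_card_filter_range {t n : ℕ} (h : t < n) :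
    blockCount t = ((range n).filter (fun j => t.testBit j ∧ ¬ t.testBit (j + 1))).card := by
  unfold blockCount
  congr 1
  ext j
  simp only [mem_filter, mem_range, and_congr_left_iff, and_imp]
  intro hj _
  have : j < t := Nat.lt_two_pow_self.trans_le (Nat.ge_two_pow_of_testBit hj)
  omega

lemma blockCount_zero : blockCount 0 = 0 := rfl

lemma blockCount_one : blockCount 1 = 1 := rfl

lemma blockCount_bit (b : Bool) (t : ℕ) :
    blockCount (Nat.bit b t) = blockCount t + if b ∧ ¬ t.testBit 0 then 1 else 0 := by
  rw [blockCount_eq_card_filter_range (n := 2 * t + 3) (by cases b <;> simp [Nat.bit_val]),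
    card_filter, sum_range_succ']
  simp only [Nat.testBit_bit_succ, Nat.testBit_bit_zero, ← card_filter]
  rw [← blockCount_eq_card_filter_range (by omega)]

lemma blockCount_two_mul (t : ℕ) : blockCount (2 * t) = blockCount t := by
  simpa using blockCount_bit false t

lemma blockCount_two_mul_add_one (t : ℕ) :
    blockCount (2 * t + 1) = blockCount t + if Even t then 1 else 0 := by
  simpa [Nat.testBit_zero, Nat.even_iff] using blockCount_bit true t

lemma blockCount_le_succ_of_even {t : ℕ} (ht : Even t) : blockCount t ≤ blockCount (t + 1) := by
  obtain ⟨w, rfl⟩ := ht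
  rw [← two_mul, blockCount_two_mul, blockCount_two_mul_add_one]
  omega

lemma blockCount_le_succ_add_one (t : ℕ) : blockCount t ≤ blockCount (t + 1) + 1 := by
  induction t using Nat.strong_induction_on with
  | _ t ih =>
    obtain ⟨w, rfl | rfl⟩ := Nat.even_or_odd' t
    · have := blockCount_le_succ_of_even (even_two_mul w)
      omega
    · rw [blockCount_two_mul_add_one, show 2 * w + 1 + 1 = 2 * (w + 1) by ring, blockCount_two_mul]
      split_ifs with hw
      · simpa using blockCount_le_succ_of_even hw
      · simpa using ih w (by omega)

section Comparison

variable {K : Type*} [Field K] [LinearOrder K] [IsStrictOrderedRing K]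

def IsSubsolution (c : ℕ → K) (d : K) (v : ℕ → K) : Prop :=
  (∀ t, v (2 * t) ≤ v t + c t) ∧ ∀ t, v (2 * t + 1) ≤ (v t + v (t + 1)) / 2 + d

def IsSupersolution (c : ℕ → K) (d : K) (w : ℕ → K) : Prop :=
  (∀ t, w t + c t ≤ w (2 * t)) ∧ ∀ t, (w t + w (t + 1)) / 2 + d ≤ w (2 * t + 1)

theorem IsSubsolution.le_of_isSupersolution {c : ℕ → K} {d : K} {v w : ℕ → K}
    (hv : IsSubsolution c d v) (hw : IsSupersolution c d w) (h0 : v 0 ≤ w 0) (h1 : v 1 ≤ w 1)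
    (t : ℕ) : v t ≤ w t := by
  induction t using Nat.strong_induction_on with
  | _ t ih =>
    obtain ⟨u, rfl | rfl⟩ := Nat.even_or_odd' t
    · rcases Nat.eq_zero_or_pos u with rfl | hu
      · exact h0
      calc v (2 * u) ≤ v u + c u := hv.1 u
        _ ≤ w u + c u := by gcongr; exact ih u (by omega)
        _ ≤ w (2 * u) := hw.1 u
    · rcases Nat.eq_zero_or_pos u with rfl | hu
      · exact h1
      calc v (2 * u + 1) ≤ (v u + v (u + 1)) / 2 + d := hv.2 u
        _ ≤ (w u + w (u + 1)) / 2 + d := by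
          gcongr
          exacts [ih u (by omega), ih (u + 1) (by omega)]
        _ ≤ w (2 * u + 1) := hw.2 u

end Comparison

lemma isSubsolution_blockCount :
    IsSubsolution (fun t => if Odd t then 1 else 0) (3 / 4) (fun t => (3 / 4 : ℚ) * blockCount t) := by
  refine ⟨fun t => ?_, fun t => ?_⟩
  · dsimp only
    rw [blockCount_two_mul]
    split_ifs <;> linarith
  · dsimp only
    rw [blockCount_two_mul_add_one]
    by_cases ht : Even t
    · have : (blockCount t : ℚ) ≤ blockCount (t + 1) := by
        exact_mod_cast blockCount_le_succ_of_even ht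
      simp only [ht, if_true]
      push_cast
      linarith
    · have : (blockCount t : ℚ) ≤ blockCount (t + 1) + 1 := by
        exact_mod_cast blockCount_le_succ_add_one t
      simp only [ht, if_false]
      push_cast
      linarith

/- For `t > 0`, `deficit t = 1 + 5 / 2 ^ k - [t even]` with `k` the length of the last block of
`1`s of `t`. It makes `5 N - deficit` satisfy the even rule and match `v` at `1` with equality. -/
def deficit (t : ℕ) : ℚ :=
  if t = 0 then 0
  else if Even t then (if Odd (t / 2) then deficit (t / 2) - 1 else deficit (t / 2))
  else if Odd (t / 2) then (deficit (t / 2) + 1) / 2 else 7 / 2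
decreasing_by all_goals omega

lemma deficit_zero : deficit 0 = 0 := by
  rw [deficit, if_pos rfl]

lemma deficit_two_mul (t : ℕ) : deficit (2 * t) = deficit t - if Odd t then 1 else 0 := by
  rcases Nat.eq_zero_or_pos t with rfl | ht
  · simp [deficit_zero]
  rw [deficit, if_neg (by omega), if_pos (even_two_mul t), Nat.mul_div_cancel_left t two_pos]
  split_ifs <;> ring

lemma deficit_two_mul_add_one (t : ℕ) :
    deficit (2 * t + 1) = if Odd t then (deficit t + 1) / 2 else 7 / 2 := by
  rw [deficit, if_neg (by omega), if_neg (by simp), show (2 * t + 1) / 2 = t by omega]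

lemma deficit_one : deficit 1 = 7 / 2 := by
  simpa using deficit_two_mul_add_one 0

lemma ite_odd_le_deficit (t : ℕ) : (if Odd t then 1 else 0) ≤ deficit t := by
  induction t using Nat.strong_induction_on with
  | _ t ih =>
    obtain ⟨u, rfl | rfl⟩ := Nat.even_or_odd' t
    · rcases Nat.eq_zero_or_pos u with rfl | hu
      · simp [deficit_zero]
      have := ih u (by omega)
      rw [deficit_two_mul, if_neg (by simp)]
      linarith
    · rw [deficit_two_mul_add_one, if_pos (odd_two_mul_add_one u)]
      split_ifs with hu
      · have := ih u (by omega)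
        rw [if_pos hu] at this
        linarith
      · norm_num

lemma deficit_nonneg (t : ℕ) : 0 ≤ deficit t :=
  le_trans (by split_ifs <;> norm_num) (ite_odd_le_deficit t)

def upperBarrier (t : ℕ) : ℚ := 5 * blockCount t - deficit t

lemma upperBarrier_two_mul (t : ℕ) :
    upperBarrier (2 * t) = upperBarrier t + if Odd t then 1 else 0 := by
  rw [upperBarrier, upperBarrier, blockCount_two_mul, deficit_two_mul]
  ring

lemma upperBarrier_two_mul_add_one (t : ℕ) :
    upperBarrier (2 * t + 1) =
      if Odd t then 5 * blockCount t - (deficit t + 1) / 2 else 5 * blockCount t + 3 / 2 := by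
  rw [upperBarrier, blockCount_two_mul_add_one, deficit_two_mul_add_one]
  by_cases ht : Odd t
  · simp [ht, Nat.not_even_iff_odd.mpr ht]
  · simp only [ht, Nat.not_odd_iff_even.mp ht, if_true, if_false]
    push_cast
    ring

lemma upperBarrier_succ_le (t : ℕ) :
    upperBarrier (t + 1) ≤ 5 * blockCount t + if Even t then 3 / 2 else -5 / 2 := by
  induction t using Nat.strong_induction_on with
  | _ t ih =>
    obtain ⟨u, rfl | rfl⟩ := Nat.even_or_odd' t
    · rw [upperBarrier_two_mul_add_one, blockCount_two_mul, if_pos (even_two_mul u)]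
      split_ifs
      · linarith [deficit_nonneg u]
      · rfl
    · have := ih u (by omega)
      rw [show 2 * u + 1 + 1 = 2 * (u + 1) by ring, upperBarrier_two_mul, blockCount_two_mul_add_one,
        if_neg (Nat.not_even_iff_odd.mpr (odd_two_mul_add_one u))]
      by_cases hu : Even u
      · simp only [hu, hu.add_one, if_true] at this ⊢
        push_cast
        linarith
      · have hu' : ¬Odd (u + 1) := Nat.not_odd_iff_even.mpr (Nat.not_even_iff_odd.mp hu).add_one
        simp only [hu, hu', if_false] at this ⊢
        push_cast
        linarith

lemma isSupersolution_upperBarrier :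
    IsSupersolution (fun t => if Odd t then 1 else 0) (3 / 4) upperBarrier := by
  refine ⟨fun t => (upperBarrier_two_mul t).ge, fun t => ?_⟩
  have hsucc := upperBarrier_succ_le t
  rw [upperBarrier_two_mul_add_one, upperBarrier]
  by_cases ht : Odd t
  · simp only [ht, Nat.not_even_iff_odd.mpr ht, if_true, if_false] at hsucc ⊢
    linarith
  · simp only [ht, Nat.not_odd_iff_even.mp ht, if_true, if_false] at hsucc ⊢
    linarith [deficit_nonneg t]

theorem v_linear_bounds (v : ℕ → ℚ) (h0 : v 0 = 0) (h1 : v 1 = 3 / 2)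
    (h4 : ∀ t : ℕ, v (4 * t) = v (2 * t))
    (h42 : ∀ t : ℕ, v (4 * t + 2) = v (2 * t + 1) + 1)
    (hodd : ∀ t : ℕ, v (2 * t + 1) = (v t + v (t + 1)) / 2 + 3 / 4) :
    ∀ t : ℕ, (3 / 4 : ℚ) * blockCount t ≤ v t ∧ v t ≤ 5 * blockCount t := by
  have hv_two_mul (t : ℕ) : v (2 * t) = v t + if Odd t then 1 else 0 := by
    obtain ⟨u, rfl | rfl⟩ := Nat.even_or_odd' t
    · rw [show 2 * (2 * u) = 4 * u by ring, h4, if_neg (by simp), add_zero]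
    · rw [show 2 * (2 * u + 1) = 4 * u + 2 by ring, h42, if_pos (odd_two_mul_add_one u)]
  have hv_sub : IsSubsolution (fun t => if Odd t then 1 else 0) (3 / 4) v :=
    ⟨fun t => (hv_two_mul t).le, fun t => (hodd t).le⟩
  have hv_super : IsSupersolution (fun t => if Odd t then 1 else 0) (3 / 4) v :=
    ⟨fun t => (hv_two_mul t).ge, fun t => (hodd t).ge⟩
  intro t
  constructor
  · exact isSubsolution_blockCount.le_of_isSupersolution hv_super (by simp [blockCount_zero, h0])
      (by norm_num [blockCount_one, h1]) t
  · calc v t ≤ upperBarrier t :=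
          hv_sub.le_of_isSupersolution isSupersolution_upperBarrier
            (by simp [upperBarrier, blockCount_zero, deficit_zero, h0])
            (by norm_num [upperBarrier, blockCount_one, deficit_one, h1]) t
      _ ≤ 5 * blockCount t := sub_le_self _ (deficit_nonneg t)
end

section
/- Let (v_t) satisfy v_0 = 0, v_1 = 3/2, v_{4t} = v_{2t}, v_{4t+2} = v_{2t+1} + 1, v_{2t+1} = (v_t + v_{t+1})/2 + 3/4. Then for every k ≥ 1 and t ≥ 0, |v_{2^k t + 2^k − 1} − v_t| ≤ 4. -/
theorem v_append_ones (v : ℕ → ℚ) (h0 : v 0 = 0) (h1 : v 1 = 3 / 2)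
    (h4 : ∀ t : ℕ, v (4 * t) = v (2 * t))
    (h42 : ∀ t : ℕ, v (4 * t + 2) = v (2 * t + 1) + 1)
    (hodd : ∀ t : ℕ, v (2 * t + 1) = (v t + v (t + 1)) / 2 + 3 / 4) :
    ∀ k t : ℕ, 1 ≤ k → |v (2 ^ k * t + 2 ^ k - 1) - v t| ≤ 4 := by
  -- v (2 s) = v s or v s + 1
  have hdouble : ∀ s : ℕ, v (2 * s) = v s ∨ v (2 * s) = v s + 1 := by
    intro s
    rcases Nat.even_or_odd s with ⟨m, hm⟩ | ⟨m, hm⟩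
    · left
      have : 2 * s = 4 * m := by omega
      rw [this, h4, show 2 * m = s by omega]
    · right
      have : 2 * s = 4 * m + 2 := by omega
      rw [this, h42, show 2 * m + 1 = s by omega]
  -- difference bound
  have hD : ∀ t : ℕ, |v (t + 1) - v t| ≤ 3 / 2 := by
    intro t
    induction t using Nat.strong_induction_on with
    | _ t ih =>
      match t with
      | 0 => rw [h1, h0]; norm_num [abs_le]
      | 1 =>
        have h2 : v 2 = v 1 + 1 := by
          have := h42 0; simpa using this
        rw [h2, h1]; norm_num [abs_le]
      | Nat.succ (Nat.succ n) =>
        rcases Nat.even_or_odd n with ⟨s, hs⟩ | ⟨s, hs⟩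
        · -- n = 2s, t = 2s+2 = 2(s+1), t+1 = 2(s+1)+1
          have hlt : s + 1 < n + 2 := by omega
          have hd := ih (s + 1) hlt
          have e1 : n + 2 + 1 = 2 * (s + 1) + 1 := by omega
          have e2 : n + 2 = 2 * (s + 1) := by omega
          show |v (n + 2 + 1) - v (n + 2)| ≤ 3 / 2
          rw [e1, hodd (s + 1), e2]
          rcases hdouble (s + 1) with h | h <;> rw [h] <;>
            (rw [abs_le] at hd ⊢; constructor <;> linarith [hd.1, hd.2])
        · -- n = 2s+1, t = 2s+3 = 2(s+1)+1, t+1 = 2(s+2)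
          have hlt : s + 1 < n + 2 := by omega
          have hd := ih (s + 1) hlt
          have e1 : n + 2 + 1 = 2 * (s + 2) := by omega
          have e2 : n + 2 = 2 * (s + 1) + 1 := by omega
          show |v (n + 2 + 1) - v (n + 2)| ≤ 3 / 2
          rw [e1, e2, hodd (s + 1)]
          have e3 : s + 1 + 1 = s + 2 := rfl
          rcases hdouble (s + 2) with h | h <;> rw [h] <;>
            (rw [abs_le] at hd ⊢; constructor <;> linarith [hd.1, hd.2])
  -- v (2^(k+1) * s) = v (2 * s)
  have hpow : ∀ k s : ℕ, v (2 ^ (k + 1) * s) = v (2 * s) := by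
    intro k
    induction k with
    | zero => intro s; norm_num
    | succ k ih =>
      intro s
      have e : 2 ^ (k + 2) * s = 4 * (2 ^ k * s) := by ring
      have e2 : 2 * (2 ^ k * s) = 2 ^ (k + 1) * s := by ring
      rw [e, h4, e2, ih]
  -- main induction
  intro k t hk
  obtain ⟨j, rfl⟩ : ∃ j, k = j + 1 := ⟨k - 1, by omega⟩
  clear hk
  induction j with
  | zero =>
    have e : 2 ^ 1 * t + 2 ^ 1 - 1 = 2 * t + 1 := by omega
    rw [e, hodd t]
    have hd := hD t
    rw [abs_le] at hd ⊢
    constructor <;> linarith [hd.1, hd.2]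
  | succ j ih =>
    have hp : (1 : ℕ) ≤ 2 ^ (j + 1) := Nat.one_le_two_pow
    set m : ℕ := 2 ^ (j + 1) * (t + 1) - 1 with hm
    have hm1 : 1 ≤ 2 ^ (j + 1) * (t + 1) := Nat.one_le_iff_ne_zero.mpr (by positivity)
    have e0 : 2 ^ (j + 1) * t + 2 ^ (j + 1) - 1 = m := by
      rw [hm]; have : 2 ^ (j + 1) * (t + 1) = 2 ^ (j + 1) * t + 2 ^ (j + 1) := by ring
      omega
    have e1 : m + 1 = 2 ^ (j + 1) * (t + 1) := by omega
    have e2 : 2 ^ (j + 2) * t + 2 ^ (j + 2) - 1 = 2 * m + 1 := by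
      have h1' : 2 ^ (j + 2) * t + 2 ^ (j + 2) = 2 * (2 ^ (j + 1) * (t + 1)) := by ring
      omega
    rw [e2, hodd m, e1, hpow (j) (t + 1)]
    rw [e0] at ih
    have hd := hD t
    rcases hdouble (t + 1) with h | h <;> rw [h] <;>
      (rw [abs_le] at hd ih ⊢; constructor <;> linarith [hd.1, hd.2, ih.1, ih.2])
end

section
/- Define sequences (w^α_t), (w^β_t) by w^α_t = v^α_{t+1} − v^α_t and w^β_t = v^β_{t+1} − v^β_t, where (v^α_t), (v^β_t) are the sequences from the Proposition on moments, determined by v^α_0 = v^β_0 = 0, v^α_1 = 1/4, v^β_1 = 9/4, v^α_2 = 3/2, v^β_2 = 7/2, together with the linear recurrences V_{2t} = (1/2)A_0 V_t + (1/4)(0,0,1,4,1,9)^T and V_{2t+1} = (1/2)A_1 V_t + (1/4)(1,9,4,1,0,0)^T, where V_t = (v^α_{2t}, v^β_{2t}, v^α_{2t+1}, v^β_{2t+1}, v^α_{2t+2}, v^β_{2t+2})^T, A_0 has rows (1,1,0,0,0,0),(1,1,0,0,0,0),(1,1,0,0,0,0),(0,0,1,1,0,0),(0,0,1,1,0,0),(0,0,1,1,0,0)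 and A_1 has rows (0,0,1,1,0,0),(0,0,1,1,0,0),(0,0,1,1,0,0),(0,0,0,0,1,1),(0,0,0,0,1,1),(0,0,0,0,1,1). Then |v^α_t − v^β_t| ≤ 48 for all t ≥ 0. -/
theorem valpha_vbeta_diff_bound (va vb : ℕ → ℚ)
    (h0a : va 0 = 0) (h0b : vb 0 = 0)
    (h1a : va 1 = 1 / 4) (h1b : vb 1 = 9 / 4)
    (h2a : va 2 = 3 / 2) (h2b : vb 2 = 7 / 2)
    (r1 : ∀ t : ℕ, va (4 * t) = (va (2 * t) + vb (2 * t)) / 2)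
    (r2 : ∀ t : ℕ, vb (4 * t) = (va (2 * t) + vb (2 * t)) / 2)
    (r3 : ∀ t : ℕ, va (4 * t + 1) = (va (2 * t) + vb (2 * t)) / 2 + 1 / 4)
    (r4 : ∀ t : ℕ, vb (4 * t + 1) = (va (2 * t + 1) + vb (2 * t + 1)) / 2 + 1)
    (r5 : ∀ t : ℕ, va (4 * t + 2) = (va (2 * t + 1) + vb (2 * t + 1)) / 2 + 1 / 4)
    (r6 : ∀ t : ℕ, vb (4 * t + 2) = (va (2 * t + 1) + vb (2 * t + 1)) / 2 + 9 / 4)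
    (r7 : ∀ t : ℕ, va (4 * t + 3) = (va (2 * t + 1) + vb (2 * t + 1)) / 2 + 1)
    (r8 : ∀ t : ℕ, vb (4 * t + 3) = (va (2 * t + 2) + vb (2 * t + 2)) / 2 + 1 / 4)
    (r9 : ∀ t : ℕ, va (4 * t + 4) = (va (2 * t + 2) + vb (2 * t + 2)) / 2)
    (r10 : ∀ t : ℕ, vb (4 * t + 4) = (va (2 * t + 2) + vb (2 * t + 2)) / 2) :
    ∀ t : ℕ, |va t - vb t| ≤ 48 := by
  -- key lemma: the increments of s = va + vb are bounded by 5/2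
  have key : ∀ m : ℕ, |va (m + 1) + vb (m + 1) - (va m + vb m)| ≤ 5 / 2 := by
    intro m
    induction m using Nat.strong_induction_on with
    | _ m ih =>
      obtain ⟨t, ht⟩ : ∃ t, m = 4 * t ∨ m = 4 * t + 1 ∨ m = 4 * t + 2 ∨ m = 4 * t + 3 :=
        ⟨m / 4, by omega⟩
      rcases ht with h | h | h | h
      · rcases Nat.eq_zero_or_pos t with h0 | h0
        · subst h; subst h0
          norm_num [h0a, h0b, h1a, h1b, abs_le]
        · have IH := ih (2 * t) (by omega)
          subst h
          have e1 := r1 t; have e2 := r2 t; have e3 := r3 t; have e4 := r4 t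
          rw [show 4 * t + 1 = 4 * t + 1 from rfl, e1, e2, e3, e4]
          rw [abs_le] at IH ⊢
          constructor <;> linarith [IH.1, IH.2]
      · have IH := ih (2 * t) (by omega)
        subst h
        have e3 := r3 t; have e4 := r4 t; have e5 := r5 t; have e6 := r6 t
        rw [show 4 * t + 1 + 1 = 4 * t + 2 from rfl, e3, e4, e5, e6]
        rw [abs_le] at IH ⊢
        constructor <;> linarith [IH.1, IH.2]
      · have IH := ih (2 * t + 1) (by omega)
        subst h
        have e5 := r5 t; have e6 := r6 t; have e7 := r7 t; have e8 := r8 t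
        rw [show 4 * t + 2 + 1 = 4 * t + 3 from rfl, e5, e6, e7, e8]
        rw [abs_le] at IH ⊢
        constructor <;> linarith [IH.1, IH.2]
      · have IH := ih (2 * t + 1) (by omega)
        subst h
        have e7 := r7 t; have e8 := r8 t; have e9 := r9 t; have e10 := r10 t
        rw [show 4 * t + 3 + 1 = 4 * t + 4 from rfl, e7, e8, e9, e10]
        rw [abs_le] at IH ⊢
        constructor <;> linarith [IH.1, IH.2]
  intro n
  obtain ⟨t, ht⟩ : ∃ t, n = 4 * t ∨ n = 4 * t + 1 ∨ n = 4 * t + 2 ∨ n = 4 * t + 3 :=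
    ⟨n / 4, by omega⟩
  rcases ht with h | h | h | h <;> subst h
  · rw [r1 t, r2 t]; norm_num
  · have K := key (2 * t)
    rw [r3 t, r4 t]
    rw [abs_le] at K ⊢
    constructor <;> linarith [K.1, K.2]
  · rw [r5 t, r6 t]
    rw [abs_le]
    constructor <;> norm_num
  · have K := key (2 * t + 1)
    rw [r7 t, r8 t]
    rw [abs_le] at K ⊢
    constructor <;> linarith [K.1, K.2]
end

section
/- Let v^α, v^β be the sequences determined by the matrix recurrences V_{2t} = (1/2)A_0 V_t + (1/4)(0,0,1,4,1,9)^T, V_{2t+1} = (1/2)A_1 V_t + (1/4)(1,9,4,1,0,0)^T with V_0 = (1/4)(0,0,1,9,6,14)^T, where V_t = (v^α_{2t}, v^β_{2t}, v^α_{2t+1}, v^β_{2t+1}, v^α_{2t+2}, v^β_{2t+2})^T, A_0 has rows (1,1,0,0,0,0) (three times) then (0,0,1,1,0,0) (three times), and A_1 has rows (0,0,1,1,0,0) (three times) then (0,0,0,0,1,1) (three times). Define ṽ_t = (v^α_t + v^β_t)/2 + 1/4 if t is odd, and ṽ_t = (v^α_t + v^β_t)/2 if t is even. Then ṽ satisfies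 ṽ_0 = 0, ṽ_1 = 3/2, ṽ_{4t} = ṽ_{2t}, ṽ_{4t+2} = ṽ_{2t+1} + 1, ṽ_{2t+1} = (ṽ_t + ṽ_{t+1})/2 + 3/4, i.e., ṽ_t = v_t for all t, where (v_t) is defined by those recurrences. -/
theorem uniq_aux (u v : ℕ → ℚ)
    (hu0 : u 0 = 0) (hu1 : u 1 = 3/2)
    (hu4 : ∀ t, u (4*t) = u (2*t))
    (hu42 : ∀ t, u (4*t+2) = u (2*t+1) + 1)
    (huo : ∀ t, u (2*t+1) = (u t + u (t+1))/2 + 3/4)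
    (hv0 : v 0 = 0) (hv1 : v 1 = 3/2)
    (hv4 : ∀ t, v (4*t) = v (2*t))
    (hv42 : ∀ t, v (4*t+2) = v (2*t+1) + 1)
    (hvo : ∀ t, v (2*t+1) = (v t + v (t+1))/2 + 3/4) :
    ∀ t, u t = v t := by
  intro t
  induction t using Nat.strong_induction_on with
  | _ t ih =>
    rcases Nat.even_or_odd t with ⟨s, hs⟩ | ⟨s, hs⟩
    · have ht : t = 2 * s := by omega
      subst ht
      rcases Nat.even_or_odd s with ⟨k, hk⟩ | ⟨k, hk⟩
      · have hk' : s = 2 * k := by omega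
        subst hk'
        rcases Nat.eq_zero_or_pos k with rfl | hkpos
        · simpa using hu0.trans hv0.symm
        · have h4 : 2 * (2 * k) = 4 * k := by ring
          rw [h4, hu4, hv4, ih (2*k) (by omega)]
      · have hk' : s = 2 * k + 1 := by omega
        subst hk'
        have h4 : 2 * (2 * k + 1) = 4 * k + 2 := by ring
        rw [h4, hu42, hv42, ih (2*k+1) (by omega)]
    · have ht : t = 2 * s + 1 := by omega
      subst ht
      rcases Nat.eq_zero_or_pos s with rfl | hspos
      · simpa using hu1.trans hv1.symm
      · rw [huo, hvo, ih s (by omega), ih (s+1) (by omega)]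

theorem vtilde_eq_v (va vb : ℕ → ℚ)
    (h0a : va 0 = 0) (h0b : vb 0 = 0)
    (h1a : va 1 = 1 / 4) (h1b : vb 1 = 9 / 4)
    (h2a : va 2 = 3 / 2) (h2b : vb 2 = 7 / 2)
    (r1 : ∀ t : ℕ, va (4 * t) = (va (2 * t) + vb (2 * t)) / 2)
    (r2 : ∀ t : ℕ, vb (4 * t) = (va (2 * t) + vb (2 * t)) / 2)
    (r3 : ∀ t : ℕ, va (4 * t + 1) = (va (2 * t) + vb (2 * t)) / 2 + 1 / 4)
    (r4 : ∀ t : ℕ, vb (4 * t + 1) = (va (2 * t + 1) + vb (2 * t + 1)) / 2 + 1)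
    (r5 : ∀ t : ℕ, va (4 * t + 2) = (va (2 * t + 1) + vb (2 * t + 1)) / 2 + 1 / 4)
    (r6 : ∀ t : ℕ, vb (4 * t + 2) = (va (2 * t + 1) + vb (2 * t + 1)) / 2 + 9 / 4)
    (r7 : ∀ t : ℕ, va (4 * t + 3) = (va (2 * t + 1) + vb (2 * t + 1)) / 2 + 1)
    (r8 : ∀ t : ℕ, vb (4 * t + 3) = (va (2 * t + 2) + vb (2 * t + 2)) / 2 + 1 / 4)
    (r9 : ∀ t : ℕ, va (4 * t + 4) = (va (2 * t + 2) + vb (2 * t + 2)) / 2)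
    (r10 : ∀ t : ℕ, vb (4 * t + 4) = (va (2 * t + 2) + vb (2 * t + 2)) / 2) :
    let vt : ℕ → ℚ := fun t => (va t + vb t) / 2 + (if t % 2 = 1 then 1 / 4 else 0)
    vt 0 = 0 ∧ vt 1 = 3 / 2 ∧
    (∀ t : ℕ, vt (4 * t) = vt (2 * t)) ∧
    (∀ t : ℕ, vt (4 * t + 2) = vt (2 * t + 1) + 1) ∧
    (∀ t : ℕ, vt (2 * t + 1) = (vt t + vt (t + 1)) / 2 + 3 / 4) ∧
    (∀ v : ℕ → ℚ, v 0 = 0 → v 1 = 3 / 2 →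
      (∀ t : ℕ, v (4 * t) = v (2 * t)) →
      (∀ t : ℕ, v (4 * t + 2) = v (2 * t + 1) + 1) →
      (∀ t : ℕ, v (2 * t + 1) = (v t + v (t + 1)) / 2 + 3 / 4) →
      ∀ t : ℕ, vt t = v t) := by
  intro vt
  have hvt : ∀ t, vt t = (va t + vb t) / 2 + (if t % 2 = 1 then 1 / 4 else 0) :=
    fun t => rfl
  have p0 : vt 0 = 0 := by rw [hvt]; norm_num [h0a, h0b]
  have p1 : vt 1 = 3 / 2 := by rw [hvt]; norm_num [h1a, h1b]
  have p4 : ∀ t : ℕ, vt (4 * t) = vt (2 * t) := by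
    intro t
    rw [hvt, hvt, r1 t, r2 t]
    have e1 : (4 * t) % 2 = 0 := by omega
    have e2 : (2 * t) % 2 = 0 := by omega
    rw [e1, e2]
    norm_num
  have p42 : ∀ t : ℕ, vt (4 * t + 2) = vt (2 * t + 1) + 1 := by
    intro t
    rw [hvt, hvt, r5 t, r6 t]
    have e1 : (4 * t + 2) % 2 = 0 := by omega
    have e2 : (2 * t + 1) % 2 = 1 := by omega
    rw [e1, e2]
    norm_num
    ring
  have podd : ∀ t : ℕ, vt (2 * t + 1) = (vt t + vt (t + 1)) / 2 + 3 / 4 := by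
    intro t
    rcases Nat.even_or_odd t with ⟨s, hs⟩ | ⟨s, hs⟩
    · have ht : t = 2 * s := by omega
      subst ht
      have h4 : 2 * (2 * s) + 1 = 4 * s + 1 := by ring
      rw [h4, hvt, hvt, hvt, r3 s, r4 s]
      have e1 : (4 * s + 1) % 2 = 1 := by omega
      have e2 : (2 * s) % 2 = 0 := by omega
      have e3 : (2 * s + 1) % 2 = 1 := by omega
      rw [e1, e2, e3]
      norm_num
      ring
    · have ht : t = 2 * s + 1 := by omega
      subst ht
      have h4 : 2 * (2 * s + 1) + 1 = 4 * s + 3 := by ring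
      have h5 : 2 * s + 1 + 1 = 2 * s + 2 := by ring
      rw [h4, h5, hvt, hvt, hvt, r7 s, r8 s]
      have e1 : (4 * s + 3) % 2 = 1 := by omega
      have e2 : (2 * s + 1) % 2 = 1 := by omega
      have e3 : (2 * s + 2) % 2 = 0 := by omega
      rw [e1, e2, e3]
      norm_num
      ring
  refine ⟨p0, p1, p4, p42, podd, ?_⟩
  intro v hv0 hv1 hv4 hv42 hvo t
  exact uniq_aux vt v p0 p1 p4 p42 podd hv0 hv1 hv4 hv42 hvo t
end
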